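/- The axiom FP is sound for ready trace equivalence: for all actions a and processes x, y, w, z, the processes (a.x + a.y + w) ‖ z and (a.x + w) ‖ z + (a.y + w) ‖ z have the same sets of ready traces. -/

import Mathlib

inductive Proc (A : Type) : Type where
  | nil : Proc A
  | pre : A → Proc A → Proc A
  | add : Proc A → Proc A → Proc A
  | par : Proc A → Proc A → Proc A

inductive Step {A : Type} : Proc A → A → Proc A → Prop where
  | pre (a : A) (p : Proc A) : Step (.pre a p) a p
  | addL {p : Proc A} {a : A} {p' : Proc A} (q : Proc A) :
      Step p a p' → Step (.add p q) a p'
  | addR {q : Proc A} {a : A} {q' : Proc A} (p : Proc A) :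
      Step q a q' → Step (.add p q) a q'
  | parL {p : Proc A} {a : A} {p' : Proc A} (q : Proc A) :
      Step p a p' → Step (.par p q) a (.par p' q)
  | parR {q : Proc A} {a : A} {q' : Proc A} (p : Proc A) :
      Step q a q' → Step (.par p q) a (.par p q')

inductive TraceTo {A : Type} : Proc A → List A → Proc A → Prop where
  | refl (p : Proc A) : TraceTo p [] p
  | step {p : Proc A} {a : A} {p' : Proc A} {α : List A} {q : Proc A} :
      Step p a p' → TraceTo p' α q → TraceTo p (a :: α) q

def traces {A : Type} (p : Proc A) : Set (List A) := {α | ∃ q, TraceTo p α q}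

def stuck {A : Type} (p : Proc A) : Prop := ∀ (a : A) (q : Proc A), ¬ Step p a q

def ctraces {A : Type} (p : Proc A) : Set (List A) :=
  {α | ∃ q, TraceTo p α q ∧ stuck q}

def initials {A : Type} (p : Proc A) : Set A := {a | ∃ p', Step p a p'}

def IsSimulation {A : Type} (R : Proc A → Proc A → Prop) : Prop :=
  ∀ p q, R p q → ∀ (a : A) (p' : Proc A), Step p a p' → ∃ q', Step q a q' ∧ R p' q'

def SimEquiv {A : Type} (p q : Proc A) : Prop :=
  (∃ R, IsSimulation R ∧ R p q) ∧ (∃ R, IsSimulation R ∧ R q p)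

def IsReadySimulation {A : Type} (R : Proc A → Proc A → Prop) : Prop :=
  IsSimulation R ∧ ∀ p q, R p q → initials p = initials q

def RSEquiv {A : Type} (p q : Proc A) : Prop :=
  (∃ R, IsReadySimulation R ∧ R p q) ∧ (∃ R, IsReadySimulation R ∧ R q p)

def IsCompletedSimulation {A : Type} (R : Proc A → Proc A → Prop) : Prop :=
  IsSimulation R ∧ ∀ p q, R p q → stuck p → stuck q

def CSEquiv {A : Type} (p q : Proc A) : Prop :=
  (∃ R, IsCompletedSimulation R ∧ R p q) ∧ (∃ R, IsCompletedSimulation R ∧ R q p)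

def Bisim {A : Type} (p q : Proc A) : Prop :=
  ∃ R, (∀ x y, R x y → R y x) ∧ IsSimulation R ∧ R p q

noncomputable def depth {A : Type} (p : Proc A) : ℕ :=
  sSup (List.length '' ctraces p)

noncomputable def norm {A : Type} (p : Proc A) : ℕ :=
  sInf (List.length '' ctraces p)

inductive RTfrom {A : Type} : Proc A → List (A × Set A) → Prop where
  | nil (p : Proc A) : RTfrom p []
  | cons {p : Proc A} {a : A} {p' : Proc A} {l : List (A × Set A)} :
      Step p a p' → RTfrom p' l → RTfrom p ((a, initials p') :: l)

def readyTraces {A : Type} (p : Proc A) : Set (Set A × List (A × Set A)) :=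
  {x | x.1 = initials p ∧ RTfrom p x.2}

/-!
Every step of `a.x + a.y + w` is a step of `a.x + w` or of `a.y + w` into the same process, and the
three summands have the same initials `{a} ∪ I(w)`; so along any interleaving with `z` the ready sets
agree until that summand moves, and afterwards the processes coincide. Hence the ready traces of the
left side are those of the two parallel compositions on the right, and the outer `+` adds none, its
two summands having the same initials.
-/

section

variable {A : Type}

theorem step_pre_iff {a b : A} {p r : Proc A} : Step (.pre a p) b r ↔ b = a ∧ r = p := by
  constructor
  · intro h
    cases h
    exact ⟨rfl, rfl⟩
  · rintro ⟨rfl, rfl⟩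
    exact .pre _ _

theorem step_add_iff {p q r : Proc A} {a : A} : Step (.add p q) a r ↔ Step p a r ∨ Step q a r := by
  constructor
  · intro h
    cases h with
    | addL _ h => exact .inl h
    | addR _ h => exact .inr h
  · rintro (h | h)
    · exact .addL q h
    · exact .addR p h

theorem step_par_iff {p q r : Proc A} {a : A} :
    Step (.par p q) a r ↔
      (∃ p', Step p a p' ∧ r = .par p' q) ∨ (∃ q', Step q a q' ∧ r = .par p q') := by
  constructor
  · intro h
    cases h with
    | parL _ h => exact .inl ⟨_, h, rfl⟩
    | parR _ h => exact .inr ⟨_, h, rfl⟩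
  · rintro (⟨p', h, rfl⟩ | ⟨q', h, rfl⟩)
    · exact .parL q h
    · exact .parR p h

theorem initials_pre (a : A) (p : Proc A) : initials (.pre a p) = {a} := by
  ext b
  simp [initials, step_pre_iff]

theorem initials_add (p q : Proc A) : initials (.add p q) = initials p ∪ initials q := by
  ext b
  simp [initials, step_add_iff, exists_or]

theorem initials_par (p q : Proc A) : initials (.par p q) = initials p ∪ initials q := by
  ext b
  simp [initials, step_par_iff, exists_or]

theorem rtfrom_cons_iff {p : Proc A} {a : A} {X : Set A} {l : List (A × Set A)} :
    RTfrom p ((a, X) :: l) ↔ ∃ p', Step p a p' ∧ initials p' = X ∧ RTfrom p' l := by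
  constructor
  · intro h
    cases h with
    | cons h hl => exact ⟨_, h, rfl, hl⟩
  · rintro ⟨p', h, rfl, hl⟩
    exact .cons h hl

theorem rtfrom_add_iff {p q : Proc A} {l : List (A × Set A)} :
    RTfrom (.add p q) l ↔ l = [] ∨ RTfrom p l ∨ RTfrom q l := by
  cases l with
  | nil => simp [RTfrom.nil]
  | cons e l =>
    obtain ⟨a, X⟩ := e
    simp only [rtfrom_cons_iff, step_add_iff, or_and_right, exists_or, reduceCtorEq, false_or]

theorem readyTraces_add_of_initials_eq {p q : Proc A} (h : initials p = initials q) :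
    readyTraces (.add p q) = readyTraces p ∪ readyTraces q := by
  ext ⟨X, l⟩
  simp only [readyTraces, Set.mem_union, Set.mem_ofPred_eq, initials_add, h, Set.union_self,
    rtfrom_add_iff]
  constructor
  · rintro ⟨rfl, rfl | hl | hl⟩
    · exact .inl ⟨rfl, .nil p⟩
    · exact .inl ⟨rfl, hl⟩
    · exact .inr ⟨rfl, hl⟩
  · rintro (⟨rfl, hl⟩ | ⟨rfl, hl⟩)
    · exact ⟨rfl, .inr (.inl hl)⟩
    · exact ⟨rfl, .inr (.inr hl)⟩

theorem initials_eq_of_step_iff {p q₁ q₂ : Proc A} (hI : initials q₁ = initials q₂)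
    (hstep : ∀ a r, Step p a r ↔ Step q₁ a r ∨ Step q₂ a r) : initials p = initials q₁ := by
  have hunion : initials p = initials q₁ ∪ initials q₂ := by
    ext a
    simp [initials, hstep, exists_or]
  rw [hunion, ← hI, Set.union_self]

theorem rtfrom_par_iff_of_step_iff {p q₁ q₂ : Proc A} (hI : initials q₁ = initials q₂)
    (hstep : ∀ a r, Step p a r ↔ Step q₁ a r ∨ Step q₂ a r) (l : List (A × Set A)) (z : Proc A) :
    RTfrom (.par p z) l ↔ RTfrom (.par q₁ z) l ∨ RTfrom (.par q₂ z) l := by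
  have hp := initials_eq_of_step_iff hI hstep
  have hpar₁ (z' : Proc A) : initials (.par q₁ z') = initials (.par p z') := by
    rw [initials_par, initials_par, hp]
  have hpar₂ (z' : Proc A) : initials (.par q₂ z') = initials (.par p z') := by
    rw [initials_par, initials_par, hp, hI]
  induction l generalizing z with
  | nil => exact iff_of_true (.nil _) (.inl (.nil _))
  | cons e l ih =>
    obtain ⟨b, X⟩ := e
    simp only [rtfrom_cons_iff]
    constructor
    · rintro ⟨r, hs, rfl, hl⟩
      rcases step_par_iff.1 hs with ⟨p', hp', rfl⟩ | ⟨z', hz', rfl⟩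
      · rcases (hstep b p').1 hp' with h | h
        · exact .inl ⟨_, .parL z h, rfl, hl⟩
        · exact .inr ⟨_, .parL z h, rfl, hl⟩
      · rcases (ih z').1 hl with h | h
        · exact .inl ⟨_, .parR q₁ hz', hpar₁ z', h⟩
        · exact .inr ⟨_, .parR q₂ hz', hpar₂ z', h⟩
    · rintro (⟨r, hs, rfl, hl⟩ | ⟨r, hs, rfl, hl⟩)
      · rcases step_par_iff.1 hs with ⟨p', hp', rfl⟩ | ⟨z', hz', rfl⟩
        · exact ⟨_, .parL z ((hstep b p').2 (.inl hp')), rfl, hl⟩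
        · exact ⟨_, .parR p hz', (hpar₁ z').symm, (ih z').2 (.inl hl)⟩
      · rcases step_par_iff.1 hs with ⟨p', hp', rfl⟩ | ⟨z', hz', rfl⟩
        · exact ⟨_, .parL z ((hstep b p').2 (.inr hp')), rfl, hl⟩
        · exact ⟨_, .parR p hz', (hpar₂ z').symm, (ih z').2 (.inr hl)⟩

theorem readyTraces_par_of_step_iff {p q₁ q₂ : Proc A} (hI : initials q₁ = initials q₂)
    (hstep : ∀ a r, Step p a r ↔ Step q₁ a r ∨ Step q₂ a r) (z : Proc A) :
    readyTraces (.par p z) = readyTraces (.par q₁ z) ∪ readyTraces (.par q₂ z) := by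
  ext ⟨X, l⟩
  simp only [readyTraces, Set.mem_union, Set.mem_ofPred_eq, rtfrom_par_iff_of_step_iff hI hstep,
    initials_par, initials_eq_of_step_iff hI hstep, ← hI, and_or_left]

end

theorem FP_sound_readyTraces_general {A : Type}
    (a : A) (x y w z : Proc A) :
    readyTraces (Proc.par (Proc.add (Proc.add (Proc.pre a x) (Proc.pre a y)) w) z)
      = readyTraces (Proc.add (Proc.par (Proc.add (Proc.pre a x) w) z)
                              (Proc.par (Proc.add (Proc.pre a y) w) z)) := by
  rw [readyTraces_add_of_initials_eq (by simp [initials_par, initials_add, initials_pre])]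
  refine readyTraces_par_of_step_iff (by simp [initials_add, initials_pre]) (fun b r => ?_) z
  simp only [step_add_iff]
  tauto

theorem FP_sound_readyTraces {A : Type} [Fintype A] [Nonempty A]
    (a : A) (x y w z : Proc A) :
    readyTraces (Proc.par (Proc.add (Proc.add (Proc.pre a x) (Proc.pre a y)) w) z)
      = readyTraces (Proc.add (Proc.par (Proc.add (Proc.pre a x) w) z)
                              (Proc.par (Proc.add (Proc.pre a y) w) z)) :=
  FP_sound_readyTraces_general a x y w z
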